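/- arXiv:1307.7422 — 7 statements merged into one kernel-verified Lean document; each statement's English description precedes it below -/
import Mathlib

section
/- For every natural number m ≥ 3 and every integer j with 1 ≤ j ≤ m−1, the number of lattice points in Z^4 of degree j in the monoid generated by the eight points (0,0,0,1), (0,0,1,1), (1,0,0,1), (1,0,1,1), (0,1,0,1), (0,1,1,1), (1,1,m,1), (1,1,m+1,1) equals (j+1)·C(j+3,3). -/
/-!
Each generator is one of the four points `A₀, B₀, C₀, D₀` of degree one, possibly lifted by
`e₃ = (0,0,1,0)`. Hence the elements of degree `j` are exactly the points
`(u_B + u_D, u_C + u_D, m u_D + t, j)` with `u ∈ ℕ⁴` of total `j` (the multiplicities of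
`A₀, B₀, C₀, D₀`) and `t ≤ j` lifts. For `j < m` the third coordinate recovers `u_D` and `t` by
division with remainder by `m`, and then `u` is determined; so degree-`j` elements correspond
bijectively to such pairs `(t, u)`, of which there are `(j + 1) * C(j + 3, 3)`.
-/

open Finset

theorem Set.ncard_setOf_sum_eq (k n : ℕ) :
    {u : Fin (k + 1) → ℕ | ∑ i, u i = n}.ncard = (n + k).choose k := by
  rw [← Nat.card_coe_set_eq, Set.coe_ofPred,
    ← Nat.card_congr (Sym.equivNatSumOfFintype (Fin (k + 1)) n), Nat.card_eq_fintype_card,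
    Sym.card_sym_eq_choose, Fintype.card_fin, Nat.add_right_comm, add_tsub_cancel_right,
    add_comm, Nat.choose_symm_add]

namespace AddSubmonoid

variable {ι M : Type*} [Fintype ι] [AddCommMonoid M]

theorem sum_nsmul_add_nsmul_mem_closure (X : ι → M) (e : M) {u : ι → ℕ} {t : ℕ}
    (ht : t ≤ ∑ i, u i) :
    ∑ i, u i • X i + t • e ∈ closure (Set.range X ∪ Set.range (fun i => X i + e)) := by
  classical
  induction t generalizing u with
  | zero =>
    rw [zero_smul, add_zero]
    refine _root_.sum_mem fun i _ => nsmul_mem ?_ (u i)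
    exact subset_closure (Or.inl ⟨i, rfl⟩)
  | succ t ih =>
    obtain ⟨i, hi⟩ : ∃ i, u i ≠ 0 := by
      by_contra! h
      simp [h] at ht
    obtain ⟨v, rfl⟩ : ∃ v, u = v + Pi.single i 1 :=
      ⟨u - Pi.single i 1, funext fun k => by
        rcases eq_or_ne k i with rfl | hk <;> simp [*]; omega⟩
    simp only [Pi.add_apply, sum_add_distrib, add_smul, Pi.single_apply, ite_smul, zero_smul,
      sum_ite_eq', mem_univ, if_true, one_smul] at ht ⊢
    have hlift : X i + e ∈ closure (Set.range X ∪ Set.range (fun i => X i + e)) :=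
      subset_closure (Or.inr ⟨i, rfl⟩)
    convert add_mem (ih (u := v) (by omega)) hlift using 1
    abel

theorem mem_closure_range_union_range_add_iff (X : ι → M) (e z : M) :
    z ∈ closure (Set.range X ∪ Set.range (fun i => X i + e)) ↔
      ∃ (u : ι → ℕ) (t : ℕ), t ≤ ∑ i, u i ∧ ∑ i, u i • X i + t • e = z := by
  classical
  refine ⟨fun hz => ?_, fun ⟨u, t, ht, hz⟩ => hz ▸ sum_nsmul_add_nsmul_mem_closure X e ht⟩
  induction hz using closure_induction with
  | mem x hx =>
    rcases hx with ⟨i, rfl⟩ | ⟨i, rfl⟩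
    · exact ⟨Pi.single i 1, 0, by simp⟩
    · exact ⟨Pi.single i 1, 1, by simp⟩
  | zero => exact ⟨0, 0, by simp⟩
  | add x y _ _ hx hy =>
    obtain ⟨u, t, ht, rfl⟩ := hx
    obtain ⟨u', t', ht', rfl⟩ := hy
    refine ⟨u + u', t + t', by simpa [sum_add_distrib] using add_le_add ht ht', ?_⟩
    simp only [Pi.add_apply, add_smul, sum_add_distrib]
    abel

end AddSubmonoid

def baseGen (m : ℕ) : Fin 4 → Fin 4 → ℤ :=
  ![![0,0,0,1], ![1,0,0,1], ![0,1,0,1], ![1,1,m,1]]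

def latticeMonoid (m : ℕ) : AddSubmonoid (Fin 4 → ℤ) :=
  AddSubmonoid.closure (Set.range (baseGen m) ∪ Set.range (fun i => baseGen m i + Pi.single 2 1))

/-- `u` counts the summands of type `A, B, C, D` and `t` how many of them are lifted. -/
def latticePoint (m t : ℕ) (u : Fin 4 → ℕ) : Fin 4 → ℕ :=
  ![u 1 + u 3, u 2 + u 3, m * u 3 + t, ∑ i, u i]

theorem closure_generators_eq (m : ℕ) :
    AddSubmonoid.closure
      ({![0,0,0,1], ![0,0,1,1], ![1,0,0,1], ![1,0,1,1], ![0,1,0,1], ![0,1,1,1],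
        ![1,1,(m:ℤ),1], ![1,1,(m:ℤ)+1,1]} : Set (Fin 4 → ℤ)) = latticeMonoid m := by
  have lift (a b c d : ℤ) : ![a, b, c, d] + Pi.single 2 1 = ![a, b, c + 1, d] := by
    funext k
    fin_cases k <;> simp
  congr 1
  ext z
  simp [Fin.exists_fin_succ, baseGen, lift]
  tauto

theorem sum_nsmul_baseGen_add (m t : ℕ) (u : Fin 4 → ℕ) :
    ∑ i, u i • baseGen m i + t • Pi.single 2 1 = fun k => (latticePoint m t u k : ℤ) := by
  funext k
  fin_cases k <;> simp [baseGen, latticePoint, Fin.sum_univ_four, mul_comm]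

theorem setOf_mem_latticeMonoid_and_degree_eq (m j : ℕ) :
    {z | z ∈ latticeMonoid m ∧ z 3 = (j : ℤ)} =
      (fun p => fun k => (latticePoint m p.1 p.2 k : ℤ)) ''
        (Set.Iic j ×ˢ {u : Fin 4 → ℕ | ∑ i, u i = j}) := by
  ext z
  simp only [latticeMonoid, AddSubmonoid.mem_closure_range_union_range_add_iff,
    sum_nsmul_baseGen_add, Set.mem_ofPred_eq, Set.mem_image, Set.mem_prod, Set.mem_Iic,
    Prod.exists]
  constructor
  · rintro ⟨⟨u, t, ht, rfl⟩, hj⟩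
    have hu : ∑ i, u i = j := Nat.cast_injective hj
    exact ⟨t, u, ⟨hu ▸ ht, hu⟩, rfl⟩
  · rintro ⟨t, u, ⟨ht, hu⟩, rfl⟩
    exact ⟨⟨u, t, hu ▸ ht, rfl⟩, by simp [latticePoint, hu]⟩

theorem injOn_latticePoint (m : ℕ) :
    Set.InjOn (fun p => fun k => (latticePoint m p.1 p.2 k : ℤ)) (Set.Iio m ×ˢ Set.univ) := by
  rintro ⟨t, u⟩ ⟨ht, -⟩ ⟨t', u'⟩ ⟨ht', -⟩ h
  have hk (k : Fin 4) : latticePoint m t u k = latticePoint m t' u' k :=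
    Nat.cast_injective (congrFun h k)
  have h0 : u 1 + u 3 = u' 1 + u' 3 := hk 0
  have h1 : u 2 + u 3 = u' 2 + u' 3 := hk 1
  have h2 : m * u 3 + t = m * u' 3 + t' := hk 2
  have h3 : ∑ i, u i = ∑ i, u' i := hk 3
  have hd : u 3 = u' 3 := by
    have hm : 0 < m := by simp only [Set.mem_Iio] at ht; omega
    simpa [Nat.mul_add_div hm, Nat.div_eq_of_lt ht, Nat.div_eq_of_lt ht'] using
      congrArg (· / m) h2
  rw [Fin.sum_univ_four, Fin.sum_univ_four] at h3
  rw [hd] at h2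
  refine Prod.ext (by omega) (funext fun k => ?_)
  fin_cases k <;> dsimp <;> omega

theorem stmt0_general (m j : ℕ) (hj1 : 1 ≤ j) (hjm : j ≤ m - 1) :
    Set.ncard {z : Fin 4 → ℤ |
        z ∈ AddSubmonoid.closure
          ({![0,0,0,1], ![0,0,1,1], ![1,0,0,1], ![1,0,1,1], ![0,1,0,1], ![0,1,1,1],
            ![1,1,(m:ℤ),1], ![1,1,(m:ℤ)+1,1]} : Set (Fin 4 → ℤ)) ∧ z 3 = (j : ℤ)} =
      (j + 1) * Nat.choose (j + 3) 3 := by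
  have hlifts : Set.Iic j ⊆ Set.Iio m := Set.Iic_subset_Iio.2 (by omega)
  rw [closure_generators_eq, setOf_mem_latticeMonoid_and_degree_eq,
    ((injOn_latticePoint m).mono (Set.prod_mono hlifts (Set.subset_univ _))).ncard_image,
    Set.ncard_prod, Set.ncard_Iic_nat, Set.ncard_setOf_sum_eq]

/-- For every natural number `m ≥ 3` and every `j` with `1 ≤ j ≤ m - 1`,
the number of elements of degree `j` (last coordinate `j`) in the submonoid of `ℤ⁴`
generated by the eight points equals `(j+1) * C(j+3, 3)`. -/
theorem stmt0 (m j : ℕ) (hm : 3 ≤ m) (hj1 : 1 ≤ j) (hjm : j ≤ m - 1) :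
    Set.ncard {z : Fin 4 → ℤ |
        z ∈ AddSubmonoid.closure
          ({![0,0,0,1], ![0,0,1,1], ![1,0,0,1], ![1,0,1,1], ![0,1,0,1], ![0,1,1,1],
            ![1,1,(m:ℤ),1], ![1,1,(m:ℤ)+1,1]} : Set (Fin 4 → ℤ)) ∧ z 3 = (j : ℤ)} =
      (j + 1) * Nat.choose (j + 3) 3 :=
  stmt0_general m j hj1 hjm
end

section
/- For every natural number m ≥ 0 and every positive integer j, the number of lattice points in j·P_m equals (m/6+1)·j^3 + 3·j^2 + (3 − m/6)·j + 1, where P_m is the convex hull in R^3 of the eight points (0,0,0), (1,0,0), (0,1,0), (0,0,1), (1,0,1), (0,1,1), (1,1,m), (1,1,m+1). -/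
/-!
Write `H(m, t)` (`pmHalfspaces m t`) for the set of `p ∈ R³` with `0 ≤ p₀, p₁ ≤ t`, `0 ≤ p₂` and
`m (p₀ + p₁ - t) ≤ p₂ ≤ m · min(p₀, p₁) + t`. For `m ≥ 0`, `P_m = H(m, 1)`: the vertices satisfy
these inequalities, and conversely a point of `H(m, 1)` is `(x, y, mc) + s e₃` with `s ∈ [0, 1]`
and `(x, y, mc)` in the tetrahedron `conv{0, e₁, e₂, (1, 1, m)}`, i.e. `max(0, x + y - 1) ≤ c ≤
min(x, y)`. The inequalities are homogeneous in `(p, t)`, so `j • P_m = H(m, j)`.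

Over `(x, y) ∈ [0, j]²` the lattice points of `H(m, j)` form a column of
`j + 1 + m (min(x, y) - max(0, x + y - j))` points. Using `min(x, y) = x - (x - y)⁺` and the
reflection `y ↦ j - y`, which turns `(x + y - j)⁺` into `(x - y)⁺`, the sum of these heights is
`(j + 1)³ + m (j³ - j) / 6`.
-/

open Pointwise Finset

def pmHalfspaces {R : Type*} [Ring R] [LE R] (m t : R) : Set (Fin 3 → R) :=
  {p | 0 ≤ p 0 ∧ p 0 ≤ t ∧ 0 ≤ p 1 ∧ p 1 ≤ t ∧ 0 ≤ p 2 ∧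
    m * (p 0 + p 1 - t) ≤ p 2 ∧ p 2 ≤ m * p 0 + t ∧ p 2 ≤ m * p 1 + t}

theorem convex_pmHalfspaces (m t : ℝ) : Convex ℝ (pmHalfspaces m t) := by
  rintro u ⟨hu₁, hu₂, hu₃, hu₄, hu₅, hu₆, hu₇, hu₈⟩ v ⟨hv₁, hv₂, hv₃, hv₄, hv₅, hv₆, hv₇, hv₈⟩
    a b ha hb hab
  have ht : t = a * t + b * t := by rw [← add_mul, hab, one_mul]
  simp only [pmHalfspaces, Set.mem_ofPred_eq, Pi.add_apply, Pi.smul_apply, smul_eq_mul]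
  refine ⟨?_, ?_, ?_, ?_, ?_, ?_, ?_, ?_⟩ <;> nlinarith

theorem smul_mem_pmHalfspaces_iff {m t c : ℝ} (hc : 0 < c) {p : Fin 3 → ℝ} :
    c • p ∈ pmHalfspaces m (c * t) ↔ p ∈ pmHalfspaces m t := by
  simp only [pmHalfspaces, Set.mem_ofPred_eq, Pi.smul_apply, smul_eq_mul]
  constructor <;> rintro ⟨h₁, h₂, h₃, h₄, h₅, h₆, h₇, h₈⟩ <;>
    refine ⟨?_, ?_, ?_, ?_, ?_, ?_, ?_, ?_⟩ <;> nlinarith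

theorem zero_mem_pmHalfspaces {m t : ℝ} (hm : 0 ≤ m) (ht : 0 ≤ t) :
    0 ∈ pmHalfspaces m t := by
  simp only [pmHalfspaces, Set.mem_ofPred_eq, Pi.zero_apply]
  refine ⟨le_rfl, ht, le_rfl, ht, le_rfl, ?_, ?_, ?_⟩ <;> nlinarith

theorem pmHalfspaces_zero (m : ℝ) : pmHalfspaces m 0 = 0 := by
  ext p
  simp only [pmHalfspaces, Set.mem_ofPred_eq, Set.mem_zero, funext_iff, Fin.forall_fin_succ,
    Fin.succ_zero_eq_one, Fin.succ_one_eq_two, IsEmpty.forall_iff, and_true, Pi.zero_apply]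
  constructor
  · rintro ⟨h₁, h₂, h₃, h₄, h₅, -, h₇, -⟩
    rw [le_antisymm h₂ h₁] at h₇
    refine ⟨?_, ?_, ?_⟩ <;> linarith
  · rintro ⟨h₀, h₁, h₂⟩
    simp [h₀, h₁, h₂]

theorem smul_pmHalfspaces_one {m t : ℝ} (hm : 0 ≤ m) (ht : 0 ≤ t) :
    t • pmHalfspaces m 1 = pmHalfspaces m t := by
  rcases ht.eq_or_lt with rfl | ht
  · rw [Set.zero_smul_set ⟨0, zero_mem_pmHalfspaces hm zero_le_one⟩, pmHalfspaces_zero]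
  · ext p
    rw [Set.mem_smul_set_iff_inv_smul_mem₀ ht.ne', ← smul_mem_pmHalfspaces_iff ht,
      smul_inv_smul₀ ht.ne', mul_one]

theorem exists_mem_Icc_mul_le_le_mul_add {m a b w z : ℝ} (hm : 0 ≤ m) (hab : a ≤ b)
    (hw : 0 ≤ w) (hlo : m * a ≤ z) (hhi : z ≤ m * b + w) :
    ∃ c ∈ Set.Icc a b, m * c ≤ z ∧ z ≤ m * c + w := by
  rcases hm.eq_or_lt with rfl | hm
  · exact ⟨a, ⟨le_rfl, hab⟩, by simpa using hlo, by simpa using hhi⟩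
  · have hzw : m * ((z - w) / m) = z - w := mul_div_cancel₀ _ hm.ne'
    refine ⟨max a ((z - w) / m), ⟨le_max_left _ _, max_le hab ?_⟩, ?_, ?_⟩
    · rw [div_le_iff₀ hm]
      linarith
    · rw [mul_max_of_nonneg _ _ hm.le, hzw]
      exact max_le hlo (by linarith)
    · rw [mul_max_of_nonneg _ _ hm.le, hzw]
      linarith [le_max_right (m * a) (z - w)]

theorem vertices_subset_pmHalfspaces {m : ℝ} (hm : 0 ≤ m) :
    ({![0,0,0], ![1,0,0], ![0,1,0], ![0,0,1], ![1,0,1], ![0,1,1], ![1,1,m], ![1,1,m+1]} :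
      Set (Fin 3 → ℝ)) ⊆ pmHalfspaces m 1 := by
  intro p hp
  rcases hp with rfl | rfl | rfl | rfl | rfl | rfl | rfl | rfl <;>
    simp only [pmHalfspaces, Set.mem_ofPred_eq, Matrix.cons_val_zero, Matrix.cons_val_one,
      Matrix.cons_val_two, Matrix.head_cons, Matrix.tail_cons] <;>
    norm_num <;> linarith

theorem pmHalfspaces_subset_convexHull {m : ℝ} (hm : 0 ≤ m) :
    pmHalfspaces m 1 ⊆ convexHull ℝ
      {![0,0,0], ![1,0,0], ![0,1,0], ![0,0,1], ![1,0,1], ![0,1,1], ![1,1,m], ![1,1,m+1]} := by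
  rintro p ⟨hx₀, hx₁, hy₀, hy₁, hz₀, hz_lo, hz_x, hz_y⟩
  obtain ⟨c, ⟨hc_lo, hc_hi⟩, hmc, hmc'⟩ :=
    exists_mem_Icc_mul_le_le_mul_add (a := max 0 (p 0 + p 1 - 1)) (b := min (p 0) (p 1))
      (z := p 2) hm (max_le (le_min hx₀ hy₀) (le_min (by linarith) (by linarith))) zero_le_one
      (by rw [mul_max_of_nonneg _ _ hm, mul_zero]; exact max_le hz₀ hz_lo)
      (by rw [mul_min_of_nonneg _ _ hm, ← min_add_add_right]; exact le_min hz_x hz_y)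
  rw [max_le_iff] at hc_lo
  rw [le_min_iff] at hc_hi
  set s := p 2 - m * c
  have hs₀ : 0 ≤ s := by linarith
  have hs₁ : 0 ≤ 1 - s := by linarith
  let w : Fin 8 → ℝ := ![(1 - s) * (1 - p 0 - p 1 + c), (1 - s) * (p 0 - c), (1 - s) * (p 1 - c),
    s * (1 - p 0 - p 1 + c), s * (p 0 - c), s * (p 1 - c), (1 - s) * c, s * c]
  let v : Fin 8 → Fin 3 → ℝ :=
    ![![0,0,0], ![1,0,0], ![0,1,0], ![0,0,1], ![1,0,1], ![0,1,1], ![1,1,m], ![1,1,m+1]]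
  have hp : p = ∑ i, w i • v i := by
    ext k
    fin_cases k <;> simp [Fin.sum_univ_eight, w, v, s] <;> ring
  rw [hp]
  refine (convex_convexHull ℝ _).sum_mem (fun i _ => ?_) ?_ (fun i _ => subset_convexHull ℝ _ ?_)
  · fin_cases i <;> exact mul_nonneg (by linarith) (by linarith)
  · simp [Fin.sum_univ_eight, w]
    ring
  · fin_cases i <;> simp [v]

theorem convexHull_eq_pmHalfspaces {m : ℝ} (hm : 0 ≤ m) :
    convexHull ℝ ({![0,0,0], ![1,0,0], ![0,1,0], ![0,0,1], ![1,0,1], ![0,1,1], ![1,1,m],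
      ![1,1,m+1]} : Set (Fin 3 → ℝ)) = pmHalfspaces m 1 :=
  (convexHull_min (vertices_subset_pmHalfspaces hm) (convex_pmHalfspaces m 1)).antisymm
    (pmHalfspaces_subset_convexHull hm)

theorem intCast_mem_pmHalfspaces_iff {R : Type*} [Ring R] [LinearOrder R] [IsStrictOrderedRing R]
    {m t : ℤ} {q : Fin 3 → ℤ} :
    (fun i => (q i : R)) ∈ pmHalfspaces (m : R) t ↔ q ∈ pmHalfspaces m t := by
  simp only [pmHalfspaces, Set.mem_ofPred_eq]
  norm_cast

theorem six_mul_sum_range_sum_range_tsub (n : ℕ) :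
    6 * ∑ x ∈ range (n + 1), ∑ y ∈ range (n + 1), (x - y) = n * (n + 1) * (n + 2) := by
  induction n with
  | zero => simp
  | succ n ih =>
    have hrow : ∀ x ∈ range (n + 1),
        ∑ y ∈ range (n + 2), (x - y) = ∑ y ∈ range (n + 1), (x - y) := by
      intro x hx
      rw [sum_range_succ, Nat.sub_eq_zero_of_le (by rw [mem_range] at hx; omega), add_zero]
    have hlast : (∑ y ∈ range (n + 2), (n + 1 - y)) * 2 = (n + 2) * (n + 1) := by
      simpa [← sum_range_reflect (fun y => y) (n + 2)] using sum_range_id_mul_two (n + 2)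
    rw [sum_range_succ, sum_congr rfl hrow]
    nlinarith

theorem sum_range_sum_range_add_tsub (n : ℕ) :
    ∑ x ∈ range (n + 1), ∑ y ∈ range (n + 1), (x + y - n) =
      ∑ x ∈ range (n + 1), ∑ y ∈ range (n + 1), (x - y) := by
  refine sum_congr rfl fun x _ => ?_
  rw [← sum_range_reflect]
  refine sum_congr rfl fun y hy => ?_
  have := mem_range.1 hy
  omega

theorem six_mul_sum_range_sum_range_min_tsub (n : ℕ) :
    6 * ∑ x ∈ range (n + 1), ∑ y ∈ range (n + 1), (min x y - (x + y - n)) + n = n ^ 3 := by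
  have hsplit : ∑ x ∈ range (n + 1), ∑ y ∈ range (n + 1), (min x y - (x + y - n))
      + 2 * ∑ x ∈ range (n + 1), ∑ y ∈ range (n + 1), (x - y)
      = (n + 1) * ∑ x ∈ range (n + 1), x := by
    calc _ = ∑ x ∈ range (n + 1), ∑ y ∈ range (n + 1),
          ((min x y - (x + y - n)) + (x + y - n) + (x - y)) := by
          simp only [sum_add_distrib, sum_range_sum_range_add_tsub]
          ring
      _ = ∑ x ∈ range (n + 1), ∑ _y ∈ range (n + 1), x :=
          sum_congr rfl fun x hx => sum_congr rfl fun y hy => by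
            rw [mem_range] at hx hy
            omega
      _ = (n + 1) * ∑ x ∈ range (n + 1), x := by
          simp only [sum_const, card_range, smul_eq_mul, mul_sum]
  have hT := six_mul_sum_range_sum_range_tsub n
  have hX := sum_range_id_mul_two (n + 1)
  simp only [Nat.add_sub_cancel] at hX
  nlinarith [congrArg (· * (n + 1)) hX]

def pmLatticePoints (m n : ℕ) : Finset (Σ _ : ℕ × ℕ, ℕ) :=
  (range (n + 1) ×ˢ range (n + 1)).sigma fun xy =>
    Icc (m * (xy.1 + xy.2 - n)) (m * min xy.1 xy.2 + n)

theorem card_pmLatticePoints (m n : ℕ) :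
    #(pmLatticePoints m n) =
      ∑ x ∈ range (n + 1), ∑ y ∈ range (n + 1), (n + 1 + m * (min x y - (x + y - n))) := by
  rw [pmLatticePoints, card_sigma, sum_product]
  refine sum_congr rfl fun x hx => sum_congr rfl fun y hy => ?_
  rw [mem_range] at hx hy
  have : m * (x + y - n) ≤ m * min x y := Nat.mul_le_mul_left _ (by omega)
  dsimp only
  rw [Nat.card_Icc, Nat.mul_sub m (min x y)]
  omega

theorem natCast_mul_sub_le_natCast_iff {a b c d : ℕ} :
    (a : ℤ) * (b - c) ≤ d ↔ a * (b - c) ≤ d := by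
  rcases le_total c b with h | h
  · rw [← Nat.cast_sub h, ← Nat.cast_mul, Nat.cast_le]
  · rw [Nat.sub_eq_zero_of_le h, mul_zero]
    simp only [zero_le, iff_true]
    exact (mul_nonpos_of_nonneg_of_nonpos (by positivity) (by omega)).trans (by positivity)

theorem mem_pmLatticePoints {m n x y z : ℕ} :
    ⟨(x, y), z⟩ ∈ pmLatticePoints m n ↔ ![(x : ℤ), y, z] ∈ pmHalfspaces (m : ℤ) n := by
  have hmin : m * min x y + n = min (m * x + n) (m * y + n) := by
    rw [← Nat.mul_min_mul_left, min_add_add_right]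
  simp only [pmLatticePoints, mem_sigma, mem_product, mem_range, mem_Icc, Nat.lt_succ_iff, hmin,
    le_min_iff, pmHalfspaces, Set.mem_ofPred_eq, Matrix.cons_val_zero, Matrix.cons_val_one,
    Matrix.cons_val_two, Matrix.head_cons, Matrix.tail_cons, Nat.cast_nonneg, true_and]
  rw [← natCast_mul_sub_le_natCast_iff (b := x + y)]
  push_cast
  norm_cast
  tauto

theorem pmHalfspaces_int_eq_image (m n : ℕ) :
    pmHalfspaces (m : ℤ) n =
      (fun p : Σ _ : ℕ × ℕ, ℕ => ![(p.1.1 : ℤ), p.1.2, p.2]) '' pmLatticePoints m n := by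
  ext q
  constructor
  · intro hq
    lift q to Fin 3 → ℕ using
      Fin.forall_fin_succ.2 ⟨hq.1, Fin.forall_fin_succ.2 ⟨hq.2.2.1, by simpa using hq.2.2.2.2.1⟩⟩
    have hq_eq : ![(q 0 : ℤ), q 1, q 2] = fun i => (q i : ℤ) := by
      ext i
      fin_cases i <;> rfl
    exact ⟨⟨(q 0, q 1), q 2⟩, mem_pmLatticePoints.2 (hq_eq ▸ hq), hq_eq⟩
  · rintro ⟨⟨⟨x, y⟩, z⟩, hp, rfl⟩
    exact mem_pmLatticePoints.1 hp

theorem six_mul_ncard_pmHalfspaces_int (m n : ℕ) :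
    6 * (pmHalfspaces (m : ℤ) n).ncard + m * n = 6 * (n + 1) ^ 3 + m * n ^ 3 := by
  have hinj : Function.Injective fun p : Σ _ : ℕ × ℕ, ℕ => ![(p.1.1 : ℤ), p.1.2, p.2] := by
    rintro ⟨⟨x, y⟩, z⟩ ⟨⟨x', y'⟩, z'⟩ h
    simp only [Matrix.vecCons_inj, Nat.cast_inj, and_true] at h
    obtain ⟨rfl, rfl, rfl⟩ := h
    rfl
  rw [pmHalfspaces_int_eq_image, Set.ncard_image_of_injective _ hinj, Set.ncard_coe_finset,
    card_pmLatticePoints]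
  simp only [sum_add_distrib, sum_const, card_range, smul_eq_mul, ← mul_sum]
  rw [← six_mul_sum_range_sum_range_min_tsub n]
  ring

theorem stmt1_general (m : ℕ) (j : ℕ) :
    (Set.ncard {z : Fin 3 → ℤ |
        (fun i => (z i : ℝ)) ∈ (j : ℝ) •
          convexHull ℝ ({![0,0,0], ![1,0,0], ![0,1,0], ![0,0,1], ![1,0,1], ![0,1,1],
            ![1,1,(m:ℝ)], ![1,1,(m:ℝ)+1]} : Set (Fin 3 → ℝ))} : ℚ) =
      ((m : ℚ)/6 + 1) * j^3 + 3 * j^2 + (3 - (m : ℚ)/6) * j + 1 := by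
  rw [convexHull_eq_pmHalfspaces (Nat.cast_nonneg m),
    smul_pmHalfspaces_one (Nat.cast_nonneg m) (Nat.cast_nonneg j)]
  have hS : {z : Fin 3 → ℤ | (fun i => (z i : ℝ)) ∈ pmHalfspaces (m : ℝ) j} =
      pmHalfspaces (m : ℤ) j := by
    ext q
    exact_mod_cast intCast_mem_pmHalfspaces_iff (R := ℝ) (m := m) (t := j)
  have hcount :
      (6 * (pmHalfspaces (m : ℤ) j).ncard + m * j : ℚ) = 6 * (j + 1) ^ 3 + m * j ^ 3 := by
    exact_mod_cast six_mul_ncard_pmHalfspaces_int m j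
  rw [hS]
  linear_combination hcount / 6

/-- The Ehrhart counting function of the polytope
`P_m = conv{(0,0,0),(1,0,0),(0,1,0),(0,0,1),(1,0,1),(0,1,1),(1,1,m),(1,1,m+1)}`:
the number of lattice points in `j • P_m` equals `(m/6+1) j³ + 3 j² + (3 - m/6) j + 1`. -/
theorem stmt1 (m : ℕ) (j : ℕ) (hj : 1 ≤ j) :
    (Set.ncard {z : Fin 3 → ℤ |
        (fun i => (z i : ℝ)) ∈ (j : ℝ) •
          convexHull ℝ ({![0,0,0], ![1,0,0], ![0,1,0], ![0,0,1], ![1,0,1], ![0,1,1],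
            ![1,1,(m:ℝ)], ![1,1,(m:ℝ)+1]} : Set (Fin 3 → ℝ))} : ℚ) =
      ((m : ℚ)/6 + 1) * j^3 + 3 * j^2 + (3 - (m : ℚ)/6) * j + 1 :=
  stmt1_general m j
end

section
/- Let P ⊂ R^d be a lattice polytope of dimension d and let k_0 ≥ d−1 be an integer. If every lattice point of k_0·P is a sum of k_0 lattice points of P, then for every k ≥ k_0, every lattice point of k·P is a sum of k lattice points of P. -/
/-!
Induct on `k`, splitting a lattice point `z ∈ (k + 1) • P` as `v + (z - v)` with `v` a lattice
point of `P` and `z - v ∈ k • P`. By Carathéodory, `z = ∑ μ j • w j` with affinely independent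
lattice points `w j ∈ P` and weights `μ j ≥ 0` of total `k + 1`; if some `μ j ≥ 1`, take `v = w j`.
Otherwise there are `d + 1` points and `k + 1 = d`, and `q = ∑ w j - z = ∑ (1 - μ j) • w j` is a
lattice point of the simplex. Exchanging the vertex of smallest weight for `q` rewrites `z` over a
lattice simplex whose normalized volume `|det|` has shrunk by the factor `1 - μ i < 1`, so this
descent reaches a representation with a weight `≥ 1`.
-/

open Pointwise

section WeightedSum

variable {ι E : Type*} [Fintype ι] [AddCommGroup E] [Module ℝ E]

structure IsWeightedSum (μ : ι → ℝ) (p : ι → E) (c : ℝ) (x : E) : Prop where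
  nonneg : ∀ j, 0 ≤ μ j
  sum_eq : ∑ j, μ j = c
  sum_smul_eq : ∑ j, μ j • p j = x

theorem sum_smul_update [DecidableEq ι] (a : ι → ℝ) (p : ι → E) (i : ι) (q : E) :
    ∑ j, a j • Function.update p i q j = ∑ j, a j • p j + a i • (q - p i) := by
  have : Function.update p i q = p + Pi.single i (q - p i) := by
    ext1 j; rcases eq_or_ne j i with rfl | hj <;> simp [*]
  simp [this, smul_add, Finset.sum_add_distrib, Pi.single_apply]

namespace IsWeightedSum

variable {μ : ι → ℝ} {p : ι → E} {c : ℝ} {x : E}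

theorem mem_smul {P : Set E} (h : IsWeightedSum μ p c x) (hP : Convex ℝ P) (hp : ∀ j, p j ∈ P)
    (hc : 0 < c) : x ∈ c • P := by
  refine ⟨c⁻¹ • x, ?_, smul_inv_smul₀ hc.ne' x⟩
  rw [← h.sum_smul_eq, Finset.smul_sum]
  simp_rw [smul_smul]
  exact hP.sum_mem (fun j _ => mul_nonneg (inv_nonneg.2 hc.le) (h.nonneg j))
    (by rw [← Finset.mul_sum, h.sum_eq, inv_mul_cancel₀ hc.ne']) fun j _ => hp j

theorem sub_single [DecidableEq ι] (h : IsWeightedSum μ p (c + 1) x) {i : ι} (hi : 1 ≤ μ i) :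
    IsWeightedSum (μ - Pi.single i 1) p c (x - p i) where
  nonneg j := by
    rcases eq_or_ne j i with rfl | hj
    · simpa using hi
    · simpa [hj] using h.nonneg j
  sum_eq := by simp [Finset.sum_sub_distrib, h.sum_eq]
  sum_smul_eq := by simp [sub_smul, Finset.sum_sub_distrib, h.sum_smul_eq, Pi.single_apply]

theorem sub_mem_smul {P : Set E} (h : IsWeightedSum μ p (c + 1) x) (hP : Convex ℝ P)
    (hp : ∀ j, p j ∈ P) (hc : 0 < c) {i : ι} (hi : 1 ≤ μ i) : x - p i ∈ c • P := by
  classical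
  exact (h.sub_single hi).mem_smul hP hp hc

-- A pivot step of the simplex method: `hratio` says that `i` minimises `μ j / ν j`.
theorem update [DecidableEq ι] (h : IsWeightedSum μ p c x) {ν : ι → ℝ} (hν : ∑ j, ν j = 1)
    {i : ι} (hi : 0 < ν i) (hratio : ∀ j, μ i * ν j ≤ μ j * ν i) :
    IsWeightedSum (μ - (μ i / ν i) • ν + Pi.single i (μ i / ν i))
      (Function.update p i (∑ j, ν j • p j)) c x where
  nonneg j := by
    rcases eq_or_ne j i with rfl | hj
    · simpa [div_mul_cancel₀ _ hi.ne'] using div_nonneg (h.nonneg j) hi.le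
    · have := hratio j
      simp only [Pi.add_apply, Pi.sub_apply, Pi.smul_apply, smul_eq_mul, Pi.single_eq_of_ne hj,
        add_zero, sub_nonneg]
      rw [div_mul_eq_mul_div, div_le_iff₀ hi]
      linarith
  sum_eq := by simp [Finset.sum_add_distrib, Finset.sum_sub_distrib, ← Finset.mul_sum, hν, h.sum_eq]
  sum_smul_eq := by
    rw [sum_smul_update]
    simp [add_smul, sub_smul, Finset.sum_add_distrib, Finset.sum_sub_distrib, Pi.single_apply,
      mul_smul, ← Finset.smul_sum, h.sum_smul_eq, div_mul_cancel₀ _ hi.ne', smul_sub]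

end IsWeightedSum

theorem exists_affineIndependent_isWeightedSum {s : Set E} {c : ℝ} {x : E} (hc : 0 < c)
    (hx : x ∈ c • convexHull ℝ s) :
    ∃ (n : ℕ) (p : Fin n → E) (μ : Fin n → ℝ),
      AffineIndependent ℝ p ∧ (∀ j, p j ∈ s) ∧ IsWeightedSum μ p c x := by
  obtain ⟨y, hy, rfl⟩ := hx
  obtain ⟨ι, _, p, μ, hps, hind, hpos, hsum, hy⟩ := eq_pos_convex_span_of_mem_convexHull hy
  let e := (Fintype.equivFin ι).symm
  refine ⟨_, p ∘ e, fun j => c * μ (e j), hind.comp_embedding e.toEmbedding,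
    fun j => hps ⟨_, rfl⟩, fun j => mul_nonneg hc.le (hpos _).le, ?_, ?_⟩
  · rw [← Finset.mul_sum, e.sum_comp μ, hsum, mul_one]
  · simp_rw [Function.comp_apply, mul_smul, ← Finset.smul_sum]
    rw [e.sum_comp (fun i => μ i • p i), hy]

end WeightedSum

theorem Int.natAbs_lt_natAbs_of_cast_eq_mul {a b : ℤ} {t : ℝ} (ht0 : 0 < t) (ht1 : t < 1)
    (hb : b ≠ 0) (h : (a : ℝ) = t * b) : a.natAbs < b.natAbs := by
  have : |(a : ℝ)| < |(b : ℝ)| := by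
    rw [h, abs_mul, abs_of_pos ht0]
    exact mul_lt_of_lt_one_left (abs_pos.2 (Int.cast_ne_zero.2 hb)) ht1
  rw [← Int.cast_abs, ← Int.cast_abs, Int.cast_lt, Int.abs_eq_natAbs, Int.abs_eq_natAbs] at this
  exact_mod_cast this

namespace LatticePolytope

open Matrix

variable {d : ℕ}

def toReal : (Fin d → ℤ) →+ (Fin d → ℝ) := (Int.castAddHom ℝ).compLeft (Fin d)

@[simp]
theorem toReal_apply (z : Fin d → ℤ) (l : Fin d) : toReal z l = z l := rfl

def liftMatrix {R : Type*} [One R] (p : Fin (d + 1) → Fin d → R) :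
    Matrix (Fin (d + 1)) (Fin (d + 1)) R :=
  Matrix.of fun j => Fin.snoc (p j) 1

section CommRing

variable {R : Type*} [CommRing R]

theorem vecMul_liftMatrix (μ : Fin (d + 1) → R) (p : Fin (d + 1) → Fin d → R) :
    μ ᵥ* liftMatrix p = Fin.snoc (∑ j, μ j • p j) (∑ j, μ j) := by
  ext l
  refine Fin.lastCases ?_ (fun l => ?_) l <;>
    simp [vecMul, dotProduct, liftMatrix, Finset.sum_apply]

theorem det_liftMatrix_update (p : Fin (d + 1) → Fin d → R) {ν : Fin (d + 1) → R}
    (hν : ∑ j, ν j = 1) (i : Fin (d + 1)) :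
    (liftMatrix (Function.update p i (∑ j, ν j • p j))).det = ν i * (liftMatrix p).det := by
  have : liftMatrix (Function.update p i (∑ j, ν j • p j)) =
      (liftMatrix p).updateRow i (∑ j, ν j • liftMatrix p j) := by
    rw [← vecMul_eq_sum, vecMul_liftMatrix, hν]
    ext j l
    rcases eq_or_ne j i with rfl | hj <;> simp [liftMatrix, updateRow_apply, *]
  rw [this, det_updateRow_sum, smul_eq_mul]

end CommRing

theorem det_liftMatrix_ne_zero {k : Type*} [Field k] {p : Fin (d + 1) → Fin d → k}
    (hp : AffineIndependent k p) : (liftMatrix p).det ≠ 0 := by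
  intro h0
  obtain ⟨v, hv0, hv⟩ := exists_vecMul_eq_zero_iff.mpr h0
  have hzero : (0 : Fin (d + 1) → k) = Fin.snoc 0 0 := by
    ext l; refine Fin.lastCases ?_ (fun l => ?_) l <;> simp
  rw [vecMul_liftMatrix, hzero, Fin.snoc_inj] at hv
  exact hv0 (funext fun j =>
    affineIndependent_iff.mp hp Finset.univ v hv.2 hv.1 j (Finset.mem_univ j))

theorem cast_det_liftMatrix (w : Fin (d + 1) → Fin d → ℤ) :
    ((liftMatrix w).det : ℝ) = (liftMatrix (toReal ∘ w)).det := by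
  rw [Int.cast_det]
  congr 1
  ext j l
  refine Fin.lastCases ?_ (fun l => ?_) l <;> simp [liftMatrix]

variable {P : Set (Fin d → ℝ)}

theorem exists_pivot (hP : Convex ℝ P) (hd : 0 < d) {w : Fin (d + 1) → Fin d → ℤ}
    (hw : ∀ j, toReal (w j) ∈ P) {μ : Fin (d + 1) → ℝ} {z : Fin d → ℤ}
    (h : IsWeightedSum μ (toReal ∘ w) d (toReal z)) (hlt : ∀ j, μ j < 1) :
    ∃ (w' : Fin (d + 1) → Fin d → ℤ) (μ' : Fin (d + 1) → ℝ), (∀ j, toReal (w' j) ∈ P) ∧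
      IsWeightedSum μ' (toReal ∘ w') d (toReal z) ∧
      ∃ t : ℝ, 0 < t ∧ t < 1 ∧ ((liftMatrix w').det : ℝ) = t * (liftMatrix w).det := by
  obtain ⟨i, -, hmin⟩ := Finset.univ.exists_min_image μ Finset.univ_nonempty
  set ν : Fin (d + 1) → ℝ := fun j => 1 - μ j
  have hν : ∑ j, ν j = 1 := by simp [ν, Finset.sum_sub_distrib, h.sum_eq]
  set q := ∑ j, w j - z
  have hq : toReal q = ∑ j, ν j • toReal (w j) := by
    simp [q, ν, map_sum, sub_smul, Finset.sum_sub_distrib, ← h.sum_smul_eq]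
  have hqP : toReal q ∈ P :=
    hq ▸ hP.sum_mem (fun j _ => (sub_pos.2 (hlt j)).le) hν fun j _ => hw j
  have hμi : 0 < μ i := by
    have : Nontrivial (Fin (d + 1)) := Fin.nontrivial_iff_two_le.2 (by omega)
    obtain ⟨j, hj⟩ := exists_ne i
    have : ν i < 1 := hν ▸ Finset.single_lt_sum hj (Finset.mem_univ _) (Finset.mem_univ _)
      (sub_pos.2 (hlt j)) fun k _ _ => (sub_pos.2 (hlt k)).le
    linarith
  have hupdate : toReal ∘ Function.update w i q =
      Function.update (toReal ∘ w) i (∑ j, ν j • (toReal ∘ w) j) := by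
    rw [Function.comp_update, hq]; rfl
  have hratio : ∀ j, μ i * ν j ≤ μ j * ν i := fun j => by
    nlinarith [hmin j (Finset.mem_univ j)]
  refine ⟨Function.update w i q, _, ?_, hupdate ▸ h.update hν (sub_pos.2 (hlt i)) hratio,
    1 - μ i, by linarith [hlt i], by linarith, ?_⟩
  · intro j
    rcases eq_or_ne j i with rfl | hj
    · simpa using hqP
    · simpa [hj] using hw j
  · rw [cast_det_liftMatrix, cast_det_liftMatrix, hupdate, det_liftMatrix_update _ hν]

-- Descent on `|det|`, the normalized volume of the simplex.
theorem exists_isWeightedSum_one_le_of_simplex (hP : Convex ℝ P) (hd : 0 < d)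
    {w : Fin (d + 1) → Fin d → ℤ} (hdet : (liftMatrix w).det ≠ 0) (hw : ∀ j, toReal (w j) ∈ P)
    {μ : Fin (d + 1) → ℝ} {z : Fin d → ℤ} (h : IsWeightedSum μ (toReal ∘ w) d (toReal z)) :
    ∃ (w' : Fin (d + 1) → Fin d → ℤ) (μ' : Fin (d + 1) → ℝ), (∀ j, toReal (w' j) ∈ P) ∧
      IsWeightedSum μ' (toReal ∘ w') d (toReal z) ∧ ∃ j, 1 ≤ μ' j := by
  induction hN : (liftMatrix w).det.natAbs using Nat.strong_induction_on generalizing w μ with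
  | _ N IH =>
  by_cases hex : ∃ j, 1 ≤ μ j
  · exact ⟨w, μ, hw, h, hex⟩
  push Not at hex
  obtain ⟨w', μ', hw', h', t, ht0, ht1, hdet'⟩ := exists_pivot hP hd hw h hex
  have hdet'0 : (liftMatrix w').det ≠ 0 := by
    rw [← Int.cast_ne_zero (α := ℝ), hdet']
    exact mul_ne_zero ht0.ne' (Int.cast_ne_zero.2 hdet)
  exact IH _ (hN ▸ Int.natAbs_lt_natAbs_of_cast_eq_mul ht0 ht1 hdet hdet') hdet'0 hw' h' rfl

theorem exists_isWeightedSum_one_le (S : Set (Fin d → ℤ)) {k : ℕ} (hk : d ≤ k + 1)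
    {z : Fin d → ℤ} (hz : toReal z ∈ ((k : ℝ) + 1) • convexHull ℝ (toReal '' S)) :
    ∃ (n : ℕ) (w : Fin n → Fin d → ℤ) (μ : Fin n → ℝ),
      (∀ j, toReal (w j) ∈ convexHull ℝ (toReal '' S)) ∧
      IsWeightedSum μ (toReal ∘ w) ((k : ℝ) + 1) (toReal z) ∧ ∃ j, 1 ≤ μ j := by
  obtain ⟨n, p, μ, hind, hpS, h⟩ := exists_affineIndependent_isWeightedSum (by positivity) hz
  choose w hwS hw using hpS
  have hpw : p = toReal ∘ w := funext fun j => (hw j).symm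
  subst hpw
  have hwP : ∀ j, toReal (w j) ∈ convexHull ℝ (toReal '' S) :=
    fun j => subset_convexHull ℝ _ ⟨w j, hwS j, rfl⟩
  by_cases hex : ∃ j, 1 ≤ μ j
  · exact ⟨n, w, μ, hwP, h, hex⟩
  push Not at hex
  -- all weights are `< 1` but add up to `k + 1 ≥ d`, so there are `d + 1` of them: a simplex
  have hn : k + 1 < n := by
    obtain ⟨j, -, -⟩ := Finset.exists_ne_zero_of_sum_ne_zero (h.sum_eq.trans_ne (by positivity))
    have : ∑ j, μ j < ∑ _j : Fin n, 1 :=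
      Finset.sum_lt_sum_of_nonempty ⟨j, Finset.mem_univ j⟩ fun j _ => hex j
    rw [h.sum_eq] at this
    exact_mod_cast (by simpa using this : (k : ℝ) + 1 < n)
  have hn' : n ≤ d + 1 := by
    simpa using hind.card_le_finrank_succ.trans
      (Nat.add_le_add_right ((Submodule.finrank_le _).trans_eq (Module.finrank_fin_fun ℝ)) 1)
  obtain rfl : n = d + 1 := by omega
  obtain rfl : d = k + 1 := by omega
  have hdet : (liftMatrix w).det ≠ 0 := by
    rw [← Int.cast_ne_zero (α := ℝ), cast_det_liftMatrix]
    exact det_liftMatrix_ne_zero hind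
  obtain ⟨w', μ', hw', h', hex'⟩ := exists_isWeightedSum_one_le_of_simplex
    (convex_convexHull ℝ _) k.succ_pos hdet hwP (by rwa [Nat.cast_succ])
  exact ⟨_, w', μ', hw', by rwa [Nat.cast_succ] at h', hex'⟩


theorem exists_sub_mem_smul (S : Set (Fin d → ℤ)) {k : ℕ} (hk : d ≤ k + 1) {z : Fin d → ℤ}
    (hz : toReal z ∈ ((k : ℝ) + 1) • convexHull ℝ (toReal '' S)) :
    ∃ v, toReal v ∈ convexHull ℝ (toReal '' S) ∧
      toReal (z - v) ∈ (k : ℝ) • convexHull ℝ (toReal '' S) := by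
  rcases k.eq_zero_or_pos with rfl | hk0
  · refine ⟨z, by simpa using hz, ?_⟩
    rw [Nat.cast_zero, Set.zero_smul_set ⟨_, by simpa using hz⟩, sub_self, map_zero]
    rfl
  obtain ⟨n, w, μ, hw, h, j, hj⟩ := exists_isWeightedSum_one_le S hk hz
  refine ⟨w j, hw j, ?_⟩
  rw [map_sub]
  exact h.sub_mem_smul (convex_convexHull ℝ _) hw (Nat.cast_pos.2 hk0) hj

end LatticePolytope

theorem stmt5_general (d : ℕ) (V : Finset (Fin d → ℤ))
    (P : Set (Fin d → ℝ))
    (hP : P = convexHull ℝ ((fun z : Fin d → ℤ => fun i => (z i : ℝ)) '' V))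
    (k₀ : ℕ) (hk₀ : d - 1 ≤ k₀)
    (h : ∀ z : Fin d → ℤ, (fun i => (z i : ℝ)) ∈ (k₀ : ℝ) • P →
      ∃ x : Fin k₀ → (Fin d → ℤ), (∀ i, (fun l => (x i l : ℝ)) ∈ P) ∧ ∑ i, x i = z) :
    ∀ k : ℕ, k₀ ≤ k → ∀ z : Fin d → ℤ, (fun i => (z i : ℝ)) ∈ (k : ℝ) • P →
      ∃ x : Fin k → (Fin d → ℤ), (∀ i, (fun l => (x i l : ℝ)) ∈ P) ∧ ∑ i, x i = z := by
  subst hP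
  intro k hk
  induction k, hk using Nat.le_induction with
  | base => exact h
  | succ k hk IH =>
    intro z hz
    rw [Nat.cast_succ] at hz
    obtain ⟨v, hv, hzv⟩ := LatticePolytope.exists_sub_mem_smul V (show d ≤ k + 1 by omega) hz
    obtain ⟨x, hx, hsum⟩ := IH (z - v) hzv
    refine ⟨Fin.snoc x v, fun i => ?_, by simp [Fin.sum_univ_castSucc, hsum]⟩
    refine Fin.lastCases ?_ (fun i => ?_) i
    · simp only [Fin.snoc_last]
      exact hv
    · simpa using hx i

/-- Let `P ⊂ ℝ^d` be a lattice polytope of dimension `d` and `k₀ ≥ d - 1`.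
If every lattice point of `k₀ • P` is a sum of `k₀` lattice points of `P`, then the same
holds for every `k ≥ k₀`. -/
theorem stmt5 (d : ℕ) (V : Finset (Fin d → ℤ)) (V_nonempty : V.Nonempty)
    (P : Set (Fin d → ℝ))
    (hP : P = convexHull ℝ ((fun z : Fin d → ℤ => fun i => (z i : ℝ)) '' V))
    (hdim : affineSpan ℝ P = ⊤)
    (k₀ : ℕ) (hk₀ : d - 1 ≤ k₀) (hk₀pos : 1 ≤ k₀)
    (h : ∀ z : Fin d → ℤ, (fun i => (z i : ℝ)) ∈ (k₀ : ℝ) • P →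
      ∃ x : Fin k₀ → (Fin d → ℤ), (∀ i, (fun l => (x i l : ℝ)) ∈ P) ∧ ∑ i, x i = z) :
    ∀ k : ℕ, k₀ ≤ k → ∀ z : Fin d → ℤ, (fun i => (z i : ℝ)) ∈ (k : ℝ) • P →
      ∃ x : Fin k → (Fin d → ℤ), (∀ i, (fun l => (x i l : ℝ)) ∈ P) ∧ ∑ i, x i = z :=
  stmt5_general d V P hP k₀ hk₀ h
end

section
/- Let a_2, a_3, a_4 be integers and let C ⊂ R^3 be the cone generated by (0,0,1), (1,0,a_2), (0,1,a_3), (1,1,a_4). Then every lattice point of C is a nonnegative integer combination of (0,0,1), (1,0,a_2), (0,1,a_3), (1,1,a_4); i.e., C ∩ Z^3 = Z_{≥0}(1,0,a_2) + Z_{≥0}(0,1,a_3) + Z_{≥0}(1,1,a_4) + Z_{≥0}(0,0,1). -/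
/-!
Writing a point of the cone as `t₁ e₁ + t₂ e₂ + t₃ e₃ + t₄ e₄`, the first two coordinates give
`t₂ = z₀ - t₄`, `t₃ = z₁ - t₄`, and then `t₁ = (z₂ - z₀ a₂ - z₁ a₃) + t₄ (a₂ + a₃ - a₄)` is affine
in `t₄`. So membership amounts to some `t₄ ∈ [0, min z₀ z₁]` making this affine function
nonnegative; if a real `t₄` does, one of the two endpoints does, and for a lattice point both
endpoints are integers.
-/

theorem eq_generator_combination_iff {R : Type*} [CommRing R] (a₂ a₃ a₄ t₁ t₂ t₃ t₄ : R)
    (z : Fin 3 → R) :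
    z = t₁ • ![(0:R),0,1] + t₂ • ![(1:R),0,a₂] + t₃ • ![(0:R),1,a₃] + t₄ • ![(1:R),1,a₄] ↔
      z 0 = t₂ + t₄ ∧ z 1 = t₃ + t₄ ∧ z 2 = t₁ + t₂ * a₂ + t₃ * a₃ + t₄ * a₄ := by
  rw [funext_iff, Fin.forall_fin_succ, Fin.forall_fin_succ, Fin.forall_fin_one]
  simp [add_comm]

theorem exists_nonneg_generator_combination_iff {R : Type*} [CommRing R] [PartialOrder R]
    [IsOrderedRing R] (a₂ a₃ a₄ : R) (z : Fin 3 → R) :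
    (∃ t₁ t₂ t₃ t₄ : R, 0 ≤ t₁ ∧ 0 ≤ t₂ ∧ 0 ≤ t₃ ∧ 0 ≤ t₄ ∧
      z = t₁ • ![(0:R),0,1] + t₂ • ![(1:R),0,a₂] + t₃ • ![(0:R),1,a₃] + t₄ • ![(1:R),1,a₄]) ↔
      ∃ t, 0 ≤ t ∧ t ≤ z 0 ∧ t ≤ z 1 ∧ 0 ≤ z 2 - z 0 * a₂ - z 1 * a₃ + t * (a₂ + a₃ - a₄) := by
  simp only [eq_generator_combination_iff]
  constructor
  · rintro ⟨t₁, t₂, t₃, t₄, h₁, h₂, h₃, h₄, e₀, e₁, e₂⟩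
    refine ⟨t₄, h₄, ?_, ?_, ?_⟩
    · simpa [e₀] using h₂
    · simpa [e₁] using h₃
    · convert h₁ using 1; rw [e₀, e₁, e₂]; ring
  · rintro ⟨t, h₄, h₂, h₃, h₁⟩
    exact ⟨_, _, _, t, h₁, sub_nonneg.2 h₂, sub_nonneg.2 h₃, h₄, by ring, by ring, by ring⟩

theorem nonneg_add_mul_at_endpoint {R : Type*} [Ring R] [LinearOrder R] [IsOrderedRing R]
    {a b t d s : R} (hat : a ≤ t) (htb : t ≤ b) (h : 0 ≤ d + t * s) :
    0 ≤ d + a * s ∨ 0 ≤ d + b * s := by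
  rcases le_total 0 s with hs | hs
  · exact Or.inr (h.trans (by gcongr))
  · exact Or.inl (h.trans (add_le_add_right (mul_le_mul_of_nonpos_right hat hs) d))

theorem exists_nat_generator_combination_iff (a₂ a₃ a₄ : ℤ) (z : Fin 3 → ℤ) :
    (∃ c₁ c₂ c₃ c₄ : ℕ, z = (c₁ : ℤ) • ![(0:ℤ),0,1] + (c₂ : ℤ) • ![(1:ℤ),0,a₂]
        + (c₃ : ℤ) • ![(0:ℤ),1,a₃] + (c₄ : ℤ) • ![(1:ℤ),1,a₄]) ↔
      ∃ t : ℤ, 0 ≤ t ∧ t ≤ z 0 ∧ t ≤ z 1 ∧ 0 ≤ z 2 - z 0 * a₂ - z 1 * a₃ + t * (a₂ + a₃ - a₄) := by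
  rw [← exists_nonneg_generator_combination_iff]
  constructor
  · rintro ⟨c₁, c₂, c₃, c₄, h⟩
    exact ⟨c₁, c₂, c₃, c₄, by positivity, by positivity, by positivity, by positivity, h⟩
  · rintro ⟨t₁, t₂, t₃, t₄, h₁, h₂, h₃, h₄, h⟩
    lift t₁ to ℕ using h₁
    lift t₂ to ℕ using h₂
    lift t₃ to ℕ using h₃
    lift t₄ to ℕ using h₄
    exact ⟨t₁, t₂, t₃, t₄, h⟩

theorem exists_real_iff_exists_int_of_add_mul_nonneg (x y d s : ℤ) :
    (∃ t : ℝ, 0 ≤ t ∧ t ≤ x ∧ t ≤ y ∧ 0 ≤ d + t * s) ↔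
      ∃ t : ℤ, 0 ≤ t ∧ t ≤ x ∧ t ≤ y ∧ 0 ≤ d + t * s := by
  constructor
  · rintro ⟨t, ht₀, htx, hty, h⟩
    have htm : t ≤ (min x y : ℤ) := by push_cast; exact le_min htx hty
    have hm : (0 : ℤ) ≤ min x y := by exact_mod_cast ht₀.trans htm
    rcases nonneg_add_mul_at_endpoint ht₀ htm h with h | h
    · exact ⟨0, le_rfl, hm.trans (min_le_left x y), hm.trans (min_le_right x y),
        by exact_mod_cast h⟩
    · exact ⟨min x y, hm, min_le_left x y, min_le_right x y, by exact_mod_cast h⟩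
  · rintro ⟨t, ht₀, htx, hty, h⟩
    exact ⟨t, by exact_mod_cast ht₀, by exact_mod_cast htx, by exact_mod_cast hty,
      by exact_mod_cast h⟩

/-- For integers `a₂, a₃, a₄`, every lattice point of the cone generated by
`(0,0,1), (1,0,a₂), (0,1,a₃), (1,1,a₄)` is a nonnegative integer combination of these
four vectors. -/
theorem stmt6 (a₂ a₃ a₄ : ℤ) (z : Fin 3 → ℤ) :
    ((fun i => (z i : ℝ)) ∈
      {x : Fin 3 → ℝ | ∃ t₁ t₂ t₃ t₄ : ℝ, 0 ≤ t₁ ∧ 0 ≤ t₂ ∧ 0 ≤ t₃ ∧ 0 ≤ t₄ ∧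
        x = t₁ • ![(0:ℝ),0,1] + t₂ • ![(1:ℝ),0,(a₂:ℝ)] + t₃ • ![(0:ℝ),1,(a₃:ℝ)]
            + t₄ • ![(1:ℝ),1,(a₄:ℝ)]}) ↔
    (∃ c₁ c₂ c₃ c₄ : ℕ, z = (c₁ : ℤ) • ![(0:ℤ),0,1] + (c₂ : ℤ) • ![(1:ℤ),0,a₂]
        + (c₃ : ℤ) • ![(0:ℤ),1,a₃] + (c₄ : ℤ) • ![(1:ℤ),1,a₄]) := by
  rw [Set.mem_ofPred_eq, exists_nonneg_generator_combination_iff,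
    exists_nat_generator_combination_iff]
  exact_mod_cast exists_real_iff_exists_int_of_add_mul_nonneg (z 0) (z 1)
    (z 2 - z 0 * a₂ - z 1 * a₃) (a₂ + a₃ - a₄)
end

section
/- For every vertex v of the polytope P_m = conv{(0,0,0),(1,0,0),(0,1,0),(0,0,1),(1,0,1),(0,1,1),(1,1,m),(1,1,m+1)} (m ≥ 0 an integer), one has R_{≥0}(P_m − v) ∩ Z^3 = Z_{≥0}((P_m ∩ Z^3) − v); i.e., every lattice point in the tangent cone of P_m at v is a nonnegative integer combination of differences x − v with x ∈ P_m ∩ Z^3. In particular, P_m is very ample. -/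
/-!
A lattice point of the tangent cone of `P_m` at a vertex `v` satisfies every facet inequality of
`P_m` that is tight at `v`. At each of the eight vertices these are three or four explicit
inequalities, and the cone they cut out is the union of one or two unimodular cones spanned by
differences `p - v` of vertices of `P_m`; so the lattice point is a nonnegative integer combination
of such differences.
-/

open Matrix

section SupportingCone

variable {ι : Type*} [Fintype ι]

lemma dotProduct_le_of_mem_convexHull {s : Set (ι → ℝ)} {a : ι → ℝ} {r : ℝ}
    (h : ∀ y ∈ s, a ⬝ᵥ y ≤ r) {x : ι → ℝ} (hx : x ∈ convexHull ℝ s) : a ⬝ᵥ x ≤ r :=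
  convexHull_min h (convex_halfSpace_le (dotProductBilin ℝ ℝ a).isLinear r) hx

def InSupportingCone (T : Set (ι → ℤ)) (v w : ι → ℤ) : Prop :=
  ∀ a : ι → ℤ, (∀ p ∈ T, a ⬝ᵥ p ≤ a ⬝ᵥ v) → a ⬝ᵥ w ≤ 0

lemma inSupportingCone_of_eq_smul_sub {T : Set (ι → ℤ)} {v w : ι → ℤ} {t : ℝ} {x : ι → ℝ}
    (ht : 0 ≤ t) (hx : x ∈ convexHull ℝ ((fun p i => (p i : ℝ)) '' T))
    (hw : (fun i => (w i : ℝ)) = t • (x - fun i => (v i : ℝ))) :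
    InSupportingCone T v w := by
  intro a ha
  have hcast (p : ι → ℤ) : ((a ⬝ᵥ p : ℤ) : ℝ) = (fun i => (a i : ℝ)) ⬝ᵥ fun i => (p i : ℝ) :=
    (Int.castRingHom ℝ).map_dotProduct a p
  have hxv : (fun i => (a i : ℝ)) ⬝ᵥ x ≤ (fun i => (a i : ℝ)) ⬝ᵥ fun i => (v i : ℝ) := by
    refine dotProduct_le_of_mem_convexHull ?_ hx
    rintro _ ⟨p, hp, rfl⟩
    rw [← hcast, ← hcast]
    exact_mod_cast ha p hp
  have : ((a ⬝ᵥ w : ℤ) : ℝ) ≤ 0 := by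
    rw [hcast, hw, dotProduct_smul, dotProduct_sub, smul_eq_mul]
    exact mul_nonpos_of_nonneg_of_nonpos ht (sub_nonpos.2 hxv)
  exact_mod_cast this

end SupportingCone

lemma mem_closure_image_sub_of_eq {M : Type*} [AddCommGroup M] {T : Set M} {v w p₁ p₂ p₃ : M}
    (h₁ : p₁ ∈ T) (h₂ : p₂ ∈ T) (h₃ : p₃ ∈ T) {n₁ n₂ n₃ : ℤ} (hn₁ : 0 ≤ n₁) (hn₂ : 0 ≤ n₂)
    (hn₃ : 0 ≤ n₃) (hw : w = n₁ • (p₁ - v) + n₂ • (p₂ - v) + n₃ • (p₃ - v)) :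
    w ∈ AddSubmonoid.closure ((· - v) '' T) := by
  have hmem {p : M} (hp : p ∈ T) {n : ℤ} (hn : 0 ≤ n) :
      n • (p - v) ∈ AddSubmonoid.closure ((· - v) '' T) := by
    lift n to ℕ using hn
    rw [natCast_zsmul]
    exact nsmul_mem (AddSubmonoid.subset_closure (Set.mem_image_of_mem _ hp)) n
  rw [hw]
  exact add_mem (add_mem (hmem h₁ hn₁) (hmem h₂ hn₂)) (hmem h₃ hn₃)

def latticeVertices (m : ℕ) : Set (Fin 3 → ℤ) :=
  {![0,0,0], ![1,0,0], ![0,1,0], ![0,0,1], ![1,0,1], ![0,1,1], ![1,1,(m:ℤ)], ![1,1,(m:ℤ)+1]}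

lemma vertices_eq_image_latticeVertices (m : ℕ) :
    ({![0,0,0], ![1,0,0], ![0,1,0], ![0,0,1], ![1,0,1], ![0,1,1],
      ![1,1,(m:ℝ)], ![1,1,(m:ℝ)+1]} : Set (Fin 3 → ℝ)) =
      (fun p i => (p i : ℝ)) '' latticeVertices m := by
  simp only [latticeVertices, Set.image_insert_eq, Set.image_singleton]
  repeat' apply congrArg₂
  all_goals first | rfl | funext i; fin_cases i <;> simp

namespace InSupportingCone

variable {m : ℕ} {v w : Fin 3 → ℤ}

/- `mem_closure_xyz` treats the vertex `(x, y, z)` of `P_m`; the vectors `a` fed to `hw` are the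
outer normals of the facets of `P_m` through that vertex. -/

lemma mem_closure_000 (hw : InSupportingCone (latticeVertices m) ![0,0,0] w) :
    w ∈ AddSubmonoid.closure ((· - ![0,0,0]) '' latticeVertices m) := by
  have hx := hw ![-1,0,0] (by simp [latticeVertices])
  have hy := hw ![0,-1,0] (by simp [latticeVertices])
  have hz := hw ![0,0,-1] (by simp [latticeVertices, add_nonneg])
  simp only [vec3_dotProduct, cons_val] at hx hy hz
  refine mem_closure_image_sub_of_eq (p₁ := ![1,0,0]) (p₂ := ![0,1,0]) (p₃ := ![0,0,1])
    (by simp [latticeVertices]) (by simp [latticeVertices]) (by simp [latticeVertices])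
    (n₁ := w 0) (n₂ := w 1) (n₃ := w 2) (by linarith) (by linarith) (by linarith) ?_
  funext i; fin_cases i <;> simp

lemma mem_closure_100 (hw : InSupportingCone (latticeVertices m) ![1,0,0] w) :
    w ∈ AddSubmonoid.closure ((· - ![1,0,0]) '' latticeVertices m) := by
  have hx := hw ![1,0,0] (by simp [latticeVertices])
  have hy := hw ![0,-1,0] (by simp [latticeVertices])
  have hz := hw ![0,0,-1] (by simp [latticeVertices, add_nonneg])
  have hxyz := hw ![m,m,-1] (by simp [latticeVertices])
  simp only [vec3_dotProduct, cons_val] at hx hy hz hxyz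
  rcases le_total 0 (w 0 + w 1) with hc | hc
  · refine mem_closure_image_sub_of_eq (p₁ := ![0,1,0]) (p₂ := ![1,0,1]) (p₃ := ![1,1,m])
      (by simp [latticeVertices]) (by simp [latticeVertices]) (by simp [latticeVertices])
      (n₁ := -w 0) (n₂ := w 2 - m * (w 0 + w 1)) (n₃ := w 0 + w 1)
      (by linarith) (by linarith) hc ?_
    funext i; fin_cases i <;> simp only [Fin.zero_eta, Fin.mk_one, Fin.reduceFinMk,
      Pi.add_apply, Pi.smul_apply, Pi.sub_apply, cons_val, smul_eq_mul] <;> ring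
  · refine mem_closure_image_sub_of_eq (p₁ := ![0,0,0]) (p₂ := ![0,1,0]) (p₃ := ![1,0,1])
      (by simp [latticeVertices]) (by simp [latticeVertices]) (by simp [latticeVertices])
      (n₁ := -w 0 - w 1) (n₂ := w 1) (n₃ := w 2) (by linarith) (by linarith) (by linarith) ?_
    funext i; fin_cases i <;> simp only [Fin.zero_eta, Fin.mk_one, Fin.reduceFinMk,
      Pi.add_apply, Pi.smul_apply, Pi.sub_apply, cons_val, smul_eq_mul] <;> ring

lemma mem_closure_010 (hw : InSupportingCone (latticeVertices m) ![0,1,0] w) :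
    w ∈ AddSubmonoid.closure ((· - ![0,1,0]) '' latticeVertices m) := by
  have hx := hw ![-1,0,0] (by simp [latticeVertices])
  have hy := hw ![0,1,0] (by simp [latticeVertices])
  have hz := hw ![0,0,-1] (by simp [latticeVertices, add_nonneg])
  have hxyz := hw ![m,m,-1] (by simp [latticeVertices])
  simp only [vec3_dotProduct, cons_val] at hx hy hz hxyz
  rcases le_total 0 (w 0 + w 1) with hc | hc
  · refine mem_closure_image_sub_of_eq (p₁ := ![1,0,0]) (p₂ := ![0,1,1]) (p₃ := ![1,1,m])
      (by simp [latticeVertices]) (by simp [latticeVertices]) (by simp [latticeVertices])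
      (n₁ := -w 1) (n₂ := w 2 - m * (w 0 + w 1)) (n₃ := w 0 + w 1)
      (by linarith) (by linarith) hc ?_
    funext i; fin_cases i <;> simp only [Fin.zero_eta, Fin.mk_one, Fin.reduceFinMk,
      Pi.add_apply, Pi.smul_apply, Pi.sub_apply, cons_val, smul_eq_mul] <;> ring
  · refine mem_closure_image_sub_of_eq (p₁ := ![0,0,0]) (p₂ := ![1,0,0]) (p₃ := ![0,1,1])
      (by simp [latticeVertices]) (by simp [latticeVertices]) (by simp [latticeVertices])
      (n₁ := -w 0 - w 1) (n₂ := w 0) (n₃ := w 2) (by linarith) (by linarith) (by linarith) ?_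
    funext i; fin_cases i <;> simp only [Fin.zero_eta, Fin.mk_one, Fin.reduceFinMk,
      Pi.add_apply, Pi.smul_apply, Pi.sub_apply, cons_val, smul_eq_mul] <;> ring

lemma mem_closure_001 (hw : InSupportingCone (latticeVertices m) ![0,0,1] w) :
    w ∈ AddSubmonoid.closure ((· - ![0,0,1]) '' latticeVertices m) := by
  have hx := hw ![-1,0,0] (by simp [latticeVertices])
  have hy := hw ![0,-1,0] (by simp [latticeVertices])
  have hxz := hw ![-m,0,1] (by simp [latticeVertices, add_nonneg])
  have hyz := hw ![0,-m,1] (by simp [latticeVertices, add_nonneg])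
  simp only [vec3_dotProduct, cons_val] at hx hy hxz hyz
  rcases le_total (w 0) (w 1) with hc | hc
  · refine mem_closure_image_sub_of_eq (p₁ := ![0,0,0]) (p₂ := ![0,1,1]) (p₃ := ![1,1,m+1])
      (by simp [latticeVertices]) (by simp [latticeVertices]) (by simp [latticeVertices])
      (n₁ := m * w 0 - w 2) (n₂ := w 1 - w 0) (n₃ := w 0)
      (by linarith) (by linarith) (by linarith) ?_
    funext i; fin_cases i <;> simp only [Fin.zero_eta, Fin.mk_one, Fin.reduceFinMk,
      Pi.add_apply, Pi.smul_apply, Pi.sub_apply, cons_val, smul_eq_mul] <;> ring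
  · refine mem_closure_image_sub_of_eq (p₁ := ![0,0,0]) (p₂ := ![1,0,1]) (p₃ := ![1,1,m+1])
      (by simp [latticeVertices]) (by simp [latticeVertices]) (by simp [latticeVertices])
      (n₁ := m * w 1 - w 2) (n₂ := w 0 - w 1) (n₃ := w 1)
      (by linarith) (by linarith) (by linarith) ?_
    funext i; fin_cases i <;> simp only [Fin.zero_eta, Fin.mk_one, Fin.reduceFinMk,
      Pi.add_apply, Pi.smul_apply, Pi.sub_apply, cons_val, smul_eq_mul] <;> ring

lemma mem_closure_101 (hw : InSupportingCone (latticeVertices m) ![1,0,1] w) :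
    w ∈ AddSubmonoid.closure ((· - ![1,0,1]) '' latticeVertices m) := by
  have hx := hw ![1,0,0] (by simp [latticeVertices])
  have hy := hw ![0,-1,0] (by simp [latticeVertices])
  have hyz := hw ![0,-m,1] (by simp [latticeVertices, add_nonneg])
  simp only [vec3_dotProduct, cons_val] at hx hy hyz
  refine mem_closure_image_sub_of_eq (p₁ := ![1,0,0]) (p₂ := ![0,0,1]) (p₃ := ![1,1,m+1])
    (by simp [latticeVertices]) (by simp [latticeVertices]) (by simp [latticeVertices])
    (n₁ := m * w 1 - w 2) (n₂ := -w 0) (n₃ := w 1) (by linarith) (by linarith) (by linarith) ?_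
  funext i; fin_cases i <;> simp only [Fin.zero_eta, Fin.mk_one, Fin.reduceFinMk,
    Pi.add_apply, Pi.smul_apply, Pi.sub_apply, cons_val, smul_eq_mul] <;> ring

lemma mem_closure_011 (hw : InSupportingCone (latticeVertices m) ![0,1,1] w) :
    w ∈ AddSubmonoid.closure ((· - ![0,1,1]) '' latticeVertices m) := by
  have hx := hw ![-1,0,0] (by simp [latticeVertices])
  have hy := hw ![0,1,0] (by simp [latticeVertices])
  have hxz := hw ![-m,0,1] (by simp [latticeVertices, add_nonneg])
  simp only [vec3_dotProduct, cons_val] at hx hy hxz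
  refine mem_closure_image_sub_of_eq (p₁ := ![0,1,0]) (p₂ := ![0,0,1]) (p₃ := ![1,1,m+1])
    (by simp [latticeVertices]) (by simp [latticeVertices]) (by simp [latticeVertices])
    (n₁ := m * w 0 - w 2) (n₂ := -w 1) (n₃ := w 0) (by linarith) (by linarith) (by linarith) ?_
  funext i; fin_cases i <;> simp only [Fin.zero_eta, Fin.mk_one, Fin.reduceFinMk,
    Pi.add_apply, Pi.smul_apply, Pi.sub_apply, cons_val, smul_eq_mul] <;> ring

lemma mem_closure_11m (hw : InSupportingCone (latticeVertices m) ![1,1,(m:ℤ)] w) :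
    w ∈ AddSubmonoid.closure ((· - ![1,1,(m:ℤ)]) '' latticeVertices m) := by
  have hx := hw ![1,0,0] (by simp [latticeVertices])
  have hy := hw ![0,1,0] (by simp [latticeVertices])
  have hxyz := hw ![m,m,-1] (by simp [latticeVertices])
  simp only [vec3_dotProduct, cons_val] at hx hy hxyz
  refine mem_closure_image_sub_of_eq (p₁ := ![1,0,0]) (p₂ := ![0,1,0]) (p₃ := ![1,1,m+1])
    (by simp [latticeVertices]) (by simp [latticeVertices]) (by simp [latticeVertices])
    (n₁ := -w 1) (n₂ := -w 0) (n₃ := w 2 - m * w 0 - m * w 1)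
    (by linarith) (by linarith) (by linarith) ?_
  funext i; fin_cases i <;> simp only [Fin.zero_eta, Fin.mk_one, Fin.reduceFinMk,
    Pi.add_apply, Pi.smul_apply, Pi.sub_apply, cons_val, smul_eq_mul] <;> ring

lemma mem_closure_11m1 (hw : InSupportingCone (latticeVertices m) ![1,1,(m:ℤ)+1] w) :
    w ∈ AddSubmonoid.closure ((· - ![1,1,(m:ℤ)+1]) '' latticeVertices m) := by
  have hx := hw ![1,0,0] (by simp [latticeVertices])
  have hy := hw ![0,1,0] (by simp [latticeVertices])
  have hxz := hw ![-m,0,1] (by simp [latticeVertices, add_nonneg])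
  have hyz := hw ![0,-m,1] (by simp [latticeVertices, add_nonneg])
  simp only [vec3_dotProduct, cons_val] at hx hy hxz hyz
  rcases le_total (w 1) (w 0) with hc | hc
  · refine mem_closure_image_sub_of_eq (p₁ := ![1,1,m]) (p₂ := ![1,0,1]) (p₃ := ![0,0,1])
      (by simp [latticeVertices]) (by simp [latticeVertices]) (by simp [latticeVertices])
      (n₁ := m * w 1 - w 2) (n₂ := w 0 - w 1) (n₃ := -w 0)
      (by linarith) (by linarith) (by linarith) ?_
    funext i; fin_cases i <;> simp only [Fin.zero_eta, Fin.mk_one, Fin.reduceFinMk,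
      Pi.add_apply, Pi.smul_apply, Pi.sub_apply, cons_val, smul_eq_mul] <;> ring
  · refine mem_closure_image_sub_of_eq (p₁ := ![1,1,m]) (p₂ := ![0,1,1]) (p₃ := ![0,0,1])
      (by simp [latticeVertices]) (by simp [latticeVertices]) (by simp [latticeVertices])
      (n₁ := m * w 0 - w 2) (n₂ := w 1 - w 0) (n₃ := -w 1)
      (by linarith) (by linarith) (by linarith) ?_
    funext i; fin_cases i <;> simp only [Fin.zero_eta, Fin.mk_one, Fin.reduceFinMk,
      Pi.add_apply, Pi.smul_apply, Pi.sub_apply, cons_val, smul_eq_mul] <;> ring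

lemma mem_closure (hv : v ∈ latticeVertices m) (hw : InSupportingCone (latticeVertices m) v w) :
    w ∈ AddSubmonoid.closure ((· - v) '' latticeVertices m) := by
  simp only [latticeVertices, Set.mem_insert_iff, Set.mem_singleton_iff] at hv
  rcases hv with rfl | rfl | rfl | rfl | rfl | rfl | rfl | rfl
  exacts [hw.mem_closure_000, hw.mem_closure_100, hw.mem_closure_010, hw.mem_closure_001,
    hw.mem_closure_101, hw.mem_closure_011, hw.mem_closure_11m, hw.mem_closure_11m1]

end InSupportingCone

/-- For every vertex `v` of `P_m`, every lattice point of the tangent cone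
`ℝ₊ (P_m - v)` is a nonnegative integer combination of the differences `x - v` with
`x` a lattice point of `P_m`; in particular `P_m` is very ample. -/
theorem stmt8 (m : ℕ) (Pm : Set (Fin 3 → ℝ))
    (hPm : Pm = convexHull ℝ ({![0,0,0], ![1,0,0], ![0,1,0], ![0,0,1], ![1,0,1], ![0,1,1],
      ![1,1,(m:ℝ)], ![1,1,(m:ℝ)+1]} : Set (Fin 3 → ℝ)))
    (v : Fin 3 → ℤ) (hv : (fun i => (v i : ℝ)) ∈ Pm.extremePoints ℝ) :
    ∀ z : Fin 3 → ℤ,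
      (∃ t : ℝ, 0 ≤ t ∧ ∃ x ∈ Pm, (fun i => (z i : ℝ)) = t • (x - fun i => (v i : ℝ))) →
      z ∈ AddSubmonoid.closure
        {w : Fin 3 → ℤ | ∃ x : Fin 3 → ℤ, (fun i => (x i : ℝ)) ∈ Pm ∧ w = x - v} := by
  rw [vertices_eq_image_latticeVertices] at hPm
  subst hPm
  rintro z ⟨t, ht, x, hx, hz⟩
  have hvT : v ∈ latticeVertices m := by
    obtain ⟨p, hp, hpv⟩ := extremePoints_convexHull_subset hv
    rwa [show p = v from funext fun i => Int.cast_injective (congrFun hpv i)] at hp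
  refine AddSubmonoid.closure_mono ?_
    ((inSupportingCone_of_eq_smul_sub ht hx hz).mem_closure hvT)
  rintro _ ⟨p, hp, rfl⟩
  exact ⟨p, subset_convexHull ℝ _ (Set.mem_image_of_mem _ hp), rfl⟩
end

section
/- For m ≥ 1, the lattice polytope P_m = conv{(0,0,0),(1,0,0),(0,1,0),(0,0,1),(1,0,1),(0,1,1),(1,1,m),(1,1,m+1)} satisfies P_m ∩ Z^3 = {(0,0,0),(1,0,0),(0,1,0),(0,0,1),(1,0,1),(0,1,1),(1,1,m),(1,1,m+1)}; i.e., P_m contains exactly 8 lattice points. -/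
/-!
`P_m` is cut out by the eight facet inequalities `0 ≤ x ≤ 1`, `0 ≤ y ≤ 1`, `0 ≤ z` and
`m (x + y - 1) ≤ z ≤ 1 + m · min x y`. An integer solution has `x, y ∈ {0, 1}`, and then these
inequalities squeeze `z` into the two values taken by the vertices above `(x, y)`.
-/

open Matrix

variable {𝕜 : Type*} [Field 𝕜] [LinearOrder 𝕜] [IsStrictOrderedRing 𝕜]

theorem convexHull_subset_setOf_mulVec_le {κ ι : Type*} [Fintype ι] {A : Matrix κ ι 𝕜}
    {b : κ → 𝕜} {s : Set (ι → 𝕜)} (hs : ∀ v ∈ s, A *ᵥ v ≤ b) :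
    convexHull 𝕜 s ⊆ {p | A *ᵥ p ≤ b} :=
  convexHull_min hs ((convex_Iic b).linear_preimage A.mulVecLin)

namespace LatticePolytope

variable {R : Type*}

def vertices [Semiring R] (m : R) : Set (Fin 3 → R) :=
  {![0,0,0], ![1,0,0], ![0,1,0], ![0,0,1], ![1,0,1], ![0,1,1], ![1,1,m], ![1,1,m+1]}

theorem comp_mem_vertices [Semiring R] {S : Type*} [Semiring S] (f : R →+* S) {m : R}
    {v : Fin 3 → R} (hv : v ∈ vertices m) : f ∘ v ∈ vertices (f m) := by
  rcases hv with rfl | rfl | rfl | rfl | rfl | rfl | rfl | rfl <;>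
    simp [vertices, ← List.ofFn_inj, List.ofFn_succ]

/-- Row `i` encodes the facet inequality `facetMatrix m i ⬝ᵥ p ≤ facetBound m i` of `P_m`. -/
def facetMatrix [Ring R] (m : R) : Matrix (Fin 8) (Fin 3) R :=
  !![-1, 0, 0; 1, 0, 0; 0, -1, 0; 0, 1, 0; 0, 0, -1; m, m, -1; -m, 0, 1; 0, -m, 1]

def facetBound [Ring R] (m : R) : Fin 8 → R :=
  ![0, 1, 0, 1, 0, m, 1, 1]

theorem facetMatrix_mulVec_le_iff [Ring R] [PartialOrder R] [IsOrderedAddMonoid R] (m : R)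
    (p : Fin 3 → R) :
    facetMatrix m *ᵥ p ≤ facetBound m ↔
      0 ≤ p 0 ∧ p 0 ≤ 1 ∧ 0 ≤ p 1 ∧ p 1 ≤ 1 ∧ 0 ≤ p 2 ∧
        m * p 0 + m * p 1 ≤ m + p 2 ∧ p 2 ≤ m * p 0 + 1 ∧ p 2 ≤ m * p 1 + 1 := by
  simp [Pi.le_def, Fin.forall_fin_succ, facetMatrix, facetBound, dotProduct, Fin.sum_univ_three]

theorem vertices_subset_facets {m : 𝕜} (hm : 0 ≤ m) :
    vertices m ⊆ {p | facetMatrix m *ᵥ p ≤ facetBound m} := by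
  intro v hv
  rw [Set.mem_ofPred_eq, facetMatrix_mulVec_le_iff]
  rcases hv with rfl | rfl | rfl | rfl | rfl | rfl | rfl | rfl <;> simp <;> linarith

theorem mem_vertices_of_facets {m : ℤ} (z : Fin 3 → ℤ)
    (hz : facetMatrix m *ᵥ z ≤ facetBound m) : z ∈ vertices m := by
  obtain ⟨hx₀, hx₁, hy₀, hy₁, hz₀, h_low, h_up₀, h_up₁⟩ := (facetMatrix_mulVec_le_iff m z).1 hz
  obtain hx | hx : z 0 = 0 ∨ z 0 = 1 := by omega
  all_goals obtain hy | hy : z 1 = 0 ∨ z 1 = 1 := by omega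
  all_goals simp only [hx, hy, mul_zero, mul_one] at h_low h_up₀ h_up₁
  case inr.inr =>
    obtain hw | hw : z 2 = m ∨ z 2 = m + 1 := by omega
    all_goals simp [vertices, funext_iff, Fin.forall_fin_succ, hx, hy, hw]
  all_goals
    obtain hw | hw : z 2 = 0 ∨ z 2 = 1 := by omega
    all_goals simp [vertices, funext_iff, Fin.forall_fin_succ, hx, hy, hw]

end LatticePolytope

open LatticePolytope in
theorem stmt9_general (m : ℕ) (Pm : Set (Fin 3 → ℝ))
    (hPm : Pm = convexHull ℝ ({![0,0,0], ![1,0,0], ![0,1,0], ![0,0,1], ![1,0,1], ![0,1,1],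
      ![1,1,(m:ℝ)], ![1,1,(m:ℝ)+1]} : Set (Fin 3 → ℝ))) :
    ∀ z : Fin 3 → ℤ, (fun i => (z i : ℝ)) ∈ Pm ↔
      z ∈ ({![0,0,0], ![1,0,0], ![0,1,0], ![0,0,1], ![1,0,1], ![0,1,1],
        ![1,1,(m:ℤ)], ![1,1,(m:ℤ)+1]} : Set (Fin 3 → ℤ)) := by
  subst hPm
  intro z
  change _ ∈ convexHull ℝ (vertices (m : ℝ)) ↔ z ∈ vertices (m : ℤ)
  constructor
  · intro hz
    have h_real := convexHull_subset_setOf_mulVec_le (vertices_subset_facets m.cast_nonneg) hz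
    rw [Set.mem_ofPred_eq, facetMatrix_mulVec_le_iff] at h_real
    refine mem_vertices_of_facets z ((facetMatrix_mulVec_le_iff _ _).2 ?_)
    exact_mod_cast h_real
  · intro hz
    have h_cast := comp_mem_vertices (Int.castRingHom ℝ) hz
    simp only [eq_intCast, Int.cast_natCast] at h_cast
    exact subset_convexHull ℝ _ h_cast

/-- For `m ≥ 1`, the only lattice points of `P_m` are its 8 vertices. -/
theorem stmt9 (m : ℕ) (hm : 1 ≤ m) (Pm : Set (Fin 3 → ℝ))
    (hPm : Pm = convexHull ℝ ({![0,0,0], ![1,0,0], ![0,1,0], ![0,0,1], ![1,0,1], ![0,1,1],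
      ![1,1,(m:ℝ)], ![1,1,(m:ℝ)+1]} : Set (Fin 3 → ℝ))) :
    ∀ z : Fin 3 → ℤ, (fun i => (z i : ℝ)) ∈ Pm ↔
      z ∈ ({![0,0,0], ![1,0,0], ![0,1,0], ![0,0,1], ![1,0,1], ![0,1,1],
        ![1,1,(m:ℤ)], ![1,1,(m:ℤ)+1]} : Set (Fin 3 → ℤ)) :=
  stmt9_general m Pm hPm
end

section
/- For m ≥ 3, the function k ↦ C(k+1,3)·(m−k−1), viewed on real k, attains its maximum over integers 1 ≤ k ≤ m−2 at k = ⌈(3m−5)/4⌉; equivalently, C(k+1,3)(m−k−1) ≤ C(j+1,3)(m−j−1) for all integers 1 ≤ k ≤ m−2, where j = ⌈(3m−5)/4⌉. -/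
/-!
With `f k = C(k+1,3)·(m-k-1)`, Pascal's rule and `3·C(k+1,3) = C(k+1,2)·(k-1)` give
`3·(f (k+1) - f k) = C(k+1,2)·(3m-4k-5)`. So `f` increases while `4k+5 ≤ 3m` and decreases
afterwards, and `j = ⌈(3m-5)/4⌉` is exactly the turning point `4j+1 ≤ 3m ≤ 4j+5`.
-/

theorem Nat.apply_le_of_le_succ_of_succ_le {α : Type*} [Preorder α] {f : ℕ → α} {j : ℕ}
    (hup : ∀ n < j, f n ≤ f (n + 1)) (hdown : ∀ n ≥ j, f (n + 1) ≤ f n) (k : ℕ) :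
    f k ≤ f j := by
  rcases le_total k j with hkj | hjk
  · exact Nat.decreasingInduction (motive := fun k _ => f k ≤ f j)
      (fun k hk ih => (hup k hk).trans ih) le_rfl hkj
  · exact antitoneOn_nat_Ici_of_succ_le hdown (le_refl j) hjk hjk

theorem Int.three_mul_choose_three (n : ℕ) :
    3 * ((n + 1).choose 3 : ℤ) = (n + 1).choose 2 * ((n : ℤ) - 1) := by
  rcases n with _ | n
  · rfl
  have h : (n + 2).choose 3 * 3 = (n + 2).choose 2 * n := by
    simpa using Nat.choose_succ_right_eq (n + 2) 2
  push_cast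
  linear_combination (by exact_mod_cast h : ((n + 2).choose 3 : ℤ) * 3 = (n + 2).choose 2 * n)

def gapCount (m k : ℕ) : ℕ := (k + 1).choose 3 * (m - k - 1)

theorem three_mul_gapCount_succ_sub {m k : ℕ} (hk : k + 2 ≤ m) :
    3 * ((gapCount m (k + 1) : ℤ) - gapCount m k) = (k + 1).choose 2 * (3 * m - 4 * k - 5) := by
  obtain ⟨r, rfl⟩ := Nat.exists_eq_add_of_le hk
  have hsucc : k + 2 + r - (k + 1) - 1 = r := by omega
  have hself : k + 2 + r - k - 1 = r + 1 := by omega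
  rw [gapCount, gapCount, hsucc, hself, Nat.choose_succ_succ' (k + 1) 2]
  push_cast
  linear_combination (-1 : ℤ) * Int.three_mul_choose_three k

theorem gapCount_le_succ {m k : ℕ} (h : 4 * k + 5 ≤ 3 * m) :
    gapCount m k ≤ gapCount m (k + 1) := by
  rcases k with _ | k
  · simp [gapCount, Nat.choose_eq_zero_of_lt]
  have hdiff := three_mul_gapCount_succ_sub (m := m) (k := k + 1) (by omega)
  have hfactor : (0 : ℤ) ≤ (k + 1 + 1).choose 2 * (3 * m - 4 * ((k + 1 : ℕ) : ℤ) - 5) :=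
    mul_nonneg (Nat.cast_nonneg _) (by omega)
  exact_mod_cast (by linarith : (gapCount m (k + 1) : ℤ) ≤ gapCount m (k + 1 + 1))

theorem gapCount_succ_le {m k : ℕ} (h : 3 * m ≤ 4 * k + 5) :
    gapCount m (k + 1) ≤ gapCount m k := by
  by_cases hk : k + 2 ≤ m
  · have hdiff := three_mul_gapCount_succ_sub hk
    have hfactor : (k + 1).choose 2 * (3 * (m : ℤ) - 4 * k - 5) ≤ 0 :=
      mul_nonpos_of_nonneg_of_nonpos (Nat.cast_nonneg _) (by omega)
    exact_mod_cast (by linarith : (gapCount m (k + 1) : ℤ) ≤ gapCount m k)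
  · simp [gapCount, show m - (k + 1) - 1 = 0 by omega]

theorem bounds_of_eq_ceil_three_mul_sub_five_div_four {m j : ℕ}
    (hj : (j : ℤ) = ⌈(3 * (m : ℚ) - 5) / 4⌉) : 4 * j + 1 ≤ 3 * m ∧ 3 * m ≤ 4 * j + 5 := by
  rw [eq_comm, Int.ceil_eq_iff] at hj
  obtain ⟨hlo, hhi⟩ := hj
  push_cast at hlo hhi
  constructor
  · exact_mod_cast (by linarith : (4 * j + 1 : ℚ) ≤ 3 * m)
  · exact_mod_cast (by linarith : (3 * m : ℚ) ≤ 4 * j + 5)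

theorem stmt19_general (m : ℕ) (j : ℕ) (hj : (j : ℤ) = ⌈((3 * (m : ℚ) - 5) / 4)⌉) :
    ∀ k : ℕ, 1 ≤ k → k ≤ m - 2 →
      Nat.choose (k + 1) 3 * (m - k - 1) ≤ Nat.choose (j + 1) 3 * (m - j - 1) := by
  obtain ⟨hlow, hhigh⟩ := bounds_of_eq_ceil_three_mul_sub_five_div_four hj
  intro k _ _
  exact Nat.apply_le_of_le_succ_of_succ_le (f := gapCount m)
    (fun n hn => gapCount_le_succ (by omega)) (fun n hn => gapCount_succ_le (by omega)) k

/-- For `m ≥ 3`, the gap counts `C(k+1,3)*(m-k-1)` over integers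
`1 ≤ k ≤ m-2` are maximized at `k = j = ⌈(3m-5)/4⌉`. -/
theorem stmt19 (m : ℕ) (hm : 3 ≤ m) (j : ℕ) (hj : (j : ℤ) = ⌈((3 * (m : ℚ) - 5) / 4)⌉) :
    ∀ k : ℕ, 1 ≤ k → k ≤ m - 2 →
      Nat.choose (k + 1) 3 * (m - k - 1) ≤ Nat.choose (j + 1) 3 * (m - j - 1) :=
  stmt19_general m j hj
end
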